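/- arXiv:2402.11377 — 2 statements merged into one kernel-verified Lean document; each statement's English description precedes it below -/
import Mathlib

section
/- Small divisor lower bound away from resonances of second kind at large frequencies: let m > 0, γ ∈ (0, 1/2), τ ≥ τ₁ ≥ 1, and let λ_{j,η} = (1+c)sqrt(j²+m) + (r_j^j + η r_j^{-j})/⟨j⟩ with |c| ≤ 1/4 and sup_j ⟨j⟩(|r_j^j|+|r_j^{-j}|) ≤ δγ² for δ small. Suppose ω ∈ [-1/2,1/2]^ν satisfies |ω·ℓ + (1+c)(j-k)| ≥ 2γ⟨ℓ⟩^{-τ₁} (first-Melnikov condition for the difference j-k). Then there is an absolute constant C (depending on m, ν) such that for all j, k ≥ C⟨ℓ⟩^{τ₁}γ^{-1/2} with |j - k| ≤ C'⟨ℓ⟩ one has |ω·ℓ + λ_{j,η} - λ_{k,η}| ≥ 2γ^{3/2}⟨ℓ⟩^{-τ}. -/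
lemma sqrt_aux (m x : ℝ) (hm : 0 < m) (hx : 1 ≤ x) :
    |Real.sqrt (x^2 + m) - x - m/(2*x)| ≤ m^2/(8*x^3) := by
  have hx0 : 0 < x := lt_of_lt_of_le one_pos hx
  set s := Real.sqrt (x^2+m) with hs
  have hs0 : 0 ≤ s := Real.sqrt_nonneg _
  have hs2 : s^2 = x^2 + m := Real.sq_sqrt (by positivity)
  have hxs : x ≤ s := by nlinarith
  have hspos : 0 < s + x := by linarith
  have hkey : s - x - m/(2*x) = -(m^2/(2*x*(s+x)^2)) := by
    have h1 : (s - x) * (s + x) = m := by nlinarith [hs2]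
    field_simp
    rw [← h1]; ring
  rw [hkey, abs_neg, abs_of_nonneg (by positivity)]
  apply div_le_div_of_nonneg_left (by positivity) (by positivity)
  nlinarith [hxs, hx0]

lemma bound1 (m C γ q x Lt1 : ℝ) (hm : 0 < m) (hC12 : 12 ≤ C) (hCm : m ≤ C)
    (hLt1 : 1 ≤ Lt1) (hq0 : 0 < q) (hq2 : q^2 = γ) (hx12 : 12 ≤ x)
    (hx : C * Lt1 ≤ q * x) : m^2/(8*x^3) ≤ γ/Lt1/16 := by
  have hLt1pos : 0 < Lt1 := by linarith
  have hx0 : 0 < x := by linarith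
  have h2x : (C*Lt1)^2 ≤ (q*x)^2 := pow_le_pow_left₀ (by positivity) hx 2
  have hm2 : m^2 ≤ C^2 := by nlinarith
  have hLt1sq : Lt1 ≤ Lt1^2 := by nlinarith
  have e1 : m^2 * Lt1 ≤ C^2 * Lt1^2 := mul_le_mul hm2 hLt1sq hLt1pos.le (by positivity)
  rw [div_div, div_le_div_iff₀ (by positivity) (by positivity), ← hq2]
  nlinarith [mul_le_mul h2x hx12 (by norm_num) (by positivity : (0:ℝ) ≤ (q*x)^2), e1]

lemma bound2 (m C C' γ q L x y Lt1 : ℝ) (hm : 0 < m) (hC' : 0 < C')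
    (hC12 : 12 ≤ C) (hC5 : 5*m*C' ≤ C) (hLt1 : 1 ≤ Lt1) (hLLt1 : L ≤ Lt1)
    (hL1 : 1 ≤ L) (hq0 : 0 < q) (hq2 : q^2 = γ) (hx0 : 0 < x) (hy0 : 0 < y)
    (hx : C * Lt1 ≤ q * x) (hy : C * Lt1 ≤ q * y) :
    m*(C'*L)/(2*(x*y)) ≤ γ/Lt1/8 := by
  have hLt1pos : 0 < Lt1 := by linarith
  have hmC' : 0 < m*C' := mul_pos hm hC'
  have hprod : (C*Lt1)*(C*Lt1) ≤ (q*x)*(q*y) :=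
    mul_le_mul hx hy (by positivity) (by positivity)
  rw [div_div, div_le_div_iff₀ (by positivity) (by positivity), ← hq2]
  have f1 : m*C'*(L*Lt1) ≤ m*C'*(Lt1*Lt1) :=
    mul_le_mul_of_nonneg_left (mul_le_mul_of_nonneg_right hLLt1 hLt1pos.le) hmC'.le
  have f2 : 5*m*C'*(Lt1*Lt1) ≤ C*(Lt1*Lt1) :=
    mul_le_mul_of_nonneg_right hC5 (by positivity)
  have f4 : 12*(C*(Lt1*Lt1)) ≤ C*(C*(Lt1*Lt1)) :=
    mul_le_mul_of_nonneg_right hC12 (by positivity)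
  nlinarith [hprod, f1, f2, f4]

lemma bound3 (C γ q x Lt1 : ℝ) (hγ0 : 0 < γ) (hγ2 : γ < 1/2) (hC12 : 12 ≤ C)
    (hLt1 : 1 ≤ Lt1) (hq0 : 0 < q) (hq2 : q^2 = γ) (hx0 : 0 < x)
    (hx : C * Lt1 ≤ q * x) : γ^2/x^2 ≤ γ/Lt1/16 := by
  have hLt1pos : 0 < Lt1 := by linarith
  have h2x : (C*Lt1)^2 ≤ (q*x)^2 := pow_le_pow_left₀ (by positivity) hx 2
  have h12 : 12 ≤ C*Lt1 := le_trans (by norm_num)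
    (mul_le_mul hC12 hLt1 zero_le_one (by linarith))
  have g1 : (q^2)^2*(Lt1*16) ≤ 4*Lt1 := by
    nlinarith [mul_le_mul_of_nonneg_right (show q^2*q^2 ≤ 1/4 by nlinarith) hLt1pos.le]
  have g2a : 12*(C*Lt1) ≤ (C*Lt1)*(C*Lt1) := mul_le_mul_of_nonneg_right h12 (by positivity)
  have g2b : 12*Lt1 ≤ C*Lt1 := mul_le_mul_of_nonneg_right hC12 hLt1pos.le
  have g2 : 4*Lt1 ≤ (C*Lt1)^2 := by rw [pow_two]; linarith
  rw [div_div, div_le_div_iff₀ (by positivity) (by positivity), ← hq2]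
  linarith [g1, g2, h2x]

lemma hfin_aux (γ q Lt1 Lt : ℝ) (hγ0 : 0 < γ) (hq0 : 0 < q) (hq34 : q < 3/4)
    (hLt1pos : 0 < Lt1) (hLt1Lt : Lt1 ≤ Lt) :
    2 * (γ*q) * Lt⁻¹ ≤ 3/2 * (γ * Lt1⁻¹) := by
  have hi : Lt⁻¹ ≤ Lt1⁻¹ := by gcongr
  linarith [mul_le_mul_of_nonneg_left hi (by positivity : (0:ℝ) ≤ 2*(γ*q)),
    mul_le_mul_of_nonneg_right (show 2*q ≤ 3/2 by linarith)
      (by positivity : (0:ℝ) ≤ γ*Lt1⁻¹)]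

lemma assemble (G T u r1 r2 r3 r4 r5 : ℝ)
    (hMel : 2 * u ≤ |T|)
    (hfin : G ≤ 3/2 * u)
    (u1 : |r1| ≤ 5/4*(u/16)) (u2 : |r2| ≤ 5/4*(u/16))
    (u3 : |r3| ≤ 5/4*(u/8)) (u4 : |r4| ≤ u/16) (u5 : |r5| ≤ u/16) :
    G ≤ |T + (r1 - r2 + r3 + (r4 - r5))| := by
  rcases abs_le.mp u1 with ⟨v1, w1⟩
  rcases abs_le.mp u2 with ⟨v2, w2⟩
  rcases abs_le.mp u3 with ⟨v3, w3⟩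
  rcases abs_le.mp u4 with ⟨v4, w4⟩
  rcases abs_le.mp u5 with ⟨v5, w5⟩
  rcases abs_cases T with ⟨hT, _⟩ | ⟨hT, _⟩ <;> rw [hT] at hMel <;>
    rcases abs_cases (T + (r1 - r2 + r3 + (r4 - r5))) with ⟨hE, _⟩ | ⟨hE, _⟩ <;>
    rw [hE] <;> linarith

lemma core (m : ℝ) (hm : 0 < m) (C' C γ c L S x y αx αy q Lt1 Lt : ℝ)
    (hC12 : 12 ≤ C) (hCm : m ≤ C) (hC5 : 5*m*C' ≤ C) (hC' : 0 < C')
    (hγ0 : 0 < γ) (hγ2 : γ < 1/2) (hc : |c| ≤ 1/4) (hL1 : 1 ≤ L)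
    (hq : q = Real.sqrt γ) (hLt1 : 1 ≤ Lt1) (hLLt1 : L ≤ Lt1) (hLt1Lt : Lt1 ≤ Lt)
    (hx : C * Lt1 ≤ q * x) (hy : C * Lt1 ≤ q * y)
    (hx12 : 12 ≤ x) (hy12 : 12 ≤ y)
    (hxy : |x - y| ≤ C' * L)
    (hax : |αx| ≤ γ^2 / x) (hay : |αy| ≤ γ^2 / y)
    (hMel : 2 * γ * Lt1⁻¹ ≤ |S + (1+c)*(x-y)|) :
    2 * (γ*q) * Lt⁻¹
      ≤ |S + ((1+c)*Real.sqrt (x^2+m) + αx/x) - ((1+c)*Real.sqrt (y^2+m) + αy/y)| := by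
  have hq0 : 0 < q := by rw [hq]; exact Real.sqrt_pos.mpr hγ0
  have hq2 : q^2 = γ := by rw [hq]; exact Real.sq_sqrt hγ0.le
  have hq34 : q < 3/4 := by nlinarith
  have hx0 : 0 < x := by linarith
  have hy0 : 0 < y := by linarith
  have hLt1pos : 0 < Lt1 := by linarith
  have hAx := sqrt_aux m x hm (by linarith)
  have hAy := sqrt_aux m y hm (by linarith)
  have hc1 : |1 + c| ≤ 5/4 := by
    rcases abs_le.mp hc with ⟨h1, h2⟩
    rw [abs_le]; constructor <;> linarith
  have B1x := bound1 m C γ q x Lt1 hm hC12 hCm hLt1 hq0 hq2 hx12 hx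
  have B1y := bound1 m C γ q y Lt1 hm hC12 hCm hLt1 hq0 hq2 hy12 hy
  have B2 := bound2 m C C' γ q L x y Lt1 hm hC' hC12 hC5 hLt1 hLLt1 hL1 hq0 hq2 hx0 hy0 hx hy
  have B3x := bound3 C γ q x Lt1 hγ0 hγ2 hC12 hLt1 hq0 hq2 hx0 hx
  have B3y := bound3 C γ q y Lt1 hγ0 hγ2 hC12 hLt1 hq0 hq2 hy0 hy
  set sx := Real.sqrt (x^2+m) with hsx
  set sy := Real.sqrt (y^2+m) with hsy
  have u1 : |(1+c)*(sx - x - m/(2*x))| ≤ 5/4*(γ/Lt1/16) := by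
    rw [abs_mul]
    exact mul_le_mul hc1 (hAx.trans B1x) (abs_nonneg _) (by norm_num)
  have u2 : |(1+c)*(sy - y - m/(2*y))| ≤ 5/4*(γ/Lt1/16) := by
    rw [abs_mul]
    exact mul_le_mul hc1 (hAy.trans B1y) (abs_nonneg _) (by norm_num)
  have hdiff : |m/(2*x) - m/(2*y)| ≤ m*(C'*L)/(2*(x*y)) := by
    have e : m/(2*x) - m/(2*y) = m*(y-x)/(2*(x*y)) := by field_simp
    rw [e, abs_div, abs_of_pos (by positivity : (0:ℝ) < 2*(x*y)), abs_mul,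
      abs_of_pos hm, abs_sub_comm y x]
    gcongr
  have u3 : |(1+c)*(m/(2*x) - m/(2*y))| ≤ 5/4*(γ/Lt1/8) := by
    rw [abs_mul]
    exact mul_le_mul hc1 (hdiff.trans B2) (abs_nonneg _) (by norm_num)
  have u4 : |αx/x| ≤ γ/Lt1/16 := by
    rw [abs_div, abs_of_pos hx0]
    refine le_trans ?_ B3x
    have h : |αx|/x ≤ (γ^2/x)/x := by gcongr
    rwa [div_div, ← pow_two] at h
  have u5 : |αy/y| ≤ γ/Lt1/16 := by
    rw [abs_div, abs_of_pos hy0]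
    refine le_trans ?_ B3y
    have h : |αy|/y ≤ (γ^2/y)/y := by gcongr
    rwa [div_div, ← pow_two] at h
  have hfin := hfin_aux γ q Lt1 Lt hγ0 hq0 hq34 hLt1pos hLt1Lt
  have hEeq : S + ((1+c)*sx + αx/x) - ((1+c)*sy + αy/y)
      = (S + (1+c)*(x-y)) + ((1+c)*(sx - x - m/(2*x)) - (1+c)*(sy - y - m/(2*y))
          + (1+c)*(m/(2*x) - m/(2*y)) + (αx/x - αy/y)) := by ring
  rw [hEeq]
  have hMel' : 2 * (γ/Lt1) ≤ |S + (1+c)*(x-y)| := by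
    rw [div_eq_mul_inv, ← mul_assoc]; exact hMel
  have hfin' : 2 * (γ*q) * Lt⁻¹ ≤ 3/2 * (γ/Lt1) := by
    rw [div_eq_mul_inv]; exact hfin
  exact assemble _ _ (γ/Lt1) _ _ _ _ _ hMel' hfin' u1 u2 u3 u4 u5

set_option maxHeartbeats 1600000 in
/-- Small divisor lower bound away from resonances of second kind at large frequencies:
let `m > 0`, `τ ≥ τ₁ ≥ 1`, `C' > 0`, and perturbed eigenvalues
`λ_{j,η} = (1+c)√(j²+m) + (r_j^j + η r_j^{-j})/⟨j⟩` (with `λ_{0,η} = (1+c)√m + r_0^0`),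
where `|c| ≤ 1/4` and `sup_j ⟨j⟩(|r_j^j|+|r_j^{-j}|) ≤ δ₀ γ²` for `δ₀` small.  If `ω`
satisfies the first-Melnikov condition `|ω·ℓ + (1+c)(j-k)| ≥ 2γ⟨ℓ⟩^{-τ₁}`, then there is a
constant `C` (depending on `m`, `ν`, `C'`) such that for all `j, k ≥ C⟨ℓ⟩^{τ₁}γ^{-1/2}`
with `|j-k| ≤ C'⟨ℓ⟩` one has `|ω·ℓ + λ_{j,η} - λ_{k,η}| ≥ 2γ^{3/2}⟨ℓ⟩^{-τ}`. -/
theorem stmt13 (ν : ℕ) (m : ℝ) (hm : 0 < m) (τ τ₁ : ℝ) (hτ₁ : 1 ≤ τ₁) (hττ₁ : τ₁ ≤ τ)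
    (C' : ℝ) (hC' : 0 < C') :
    ∃ C > 0, ∃ δ₀ > 0, ∀ γ : ℝ, 0 < γ → γ < 1 / 2 →
      ∀ c : ℝ, |c| ≤ 1 / 4 →
      ∀ a b : ℕ → ℝ, (∀ i : ℕ, (max 1 (i : ℝ)) * (|a i| + |b i|) ≤ δ₀ * γ ^ 2) →
      ∀ ω : Fin ν → ℝ, (∀ i, |ω i| ≤ 1 / 2) →
      ∀ (ℓ : Fin ν → ℤ) (j k : ℕ) (η : ℝ), (η = 1 ∨ η = -1) →
      ∀ lam : ℕ → ℝ,
      (∀ i : ℕ, lam i =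
        if i = 0 then (1 + c) * Real.sqrt m + a 0
        else (1 + c) * Real.sqrt ((i : ℝ) ^ 2 + m) + (a i + η * b i) / (i : ℝ)) →
      2 * γ * ((max 1 (∑ i, |ℓ i|) : ℤ) : ℝ) ^ (-τ₁)
          ≤ |(∑ i, ω i * (ℓ i : ℝ)) + (1 + c) * ((j : ℝ) - (k : ℝ))| →
      C * ((max 1 (∑ i, |ℓ i|) : ℤ) : ℝ) ^ τ₁ * γ ^ (-(1 : ℝ) / 2) ≤ (j : ℝ) →
      C * ((max 1 (∑ i, |ℓ i|) : ℤ) : ℝ) ^ τ₁ * γ ^ (-(1 : ℝ) / 2) ≤ (k : ℝ) →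
      |(j : ℝ) - (k : ℝ)| ≤ C' * ((max 1 (∑ i, |ℓ i|) : ℤ) : ℝ) →
      2 * γ ^ ((3 : ℝ) / 2) * ((max 1 (∑ i, |ℓ i|) : ℤ) : ℝ) ^ (-τ)
        ≤ |(∑ i, ω i * (ℓ i : ℝ)) + lam j - lam k| := by
  refine ⟨12 + m + 5*m*C', by positivity, 1, one_pos, ?_⟩
  intro γ hγ0 hγ2 c hc a b hab ω hω ℓ j k η hη lam hlam hMel hj hk hjk
  set Cv : ℝ := 12 + m + 5*m*C' with hCv
  set L : ℝ := ((max 1 (∑ i, |ℓ i|) : ℤ) : ℝ) with hLdef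
  have hL1 : (1:ℝ) ≤ L := by
    have h : (1:ℤ) ≤ max 1 (∑ i, |ℓ i|) := le_max_left _ _
    rw [hLdef]; exact_mod_cast h
  have hL0 : (0:ℝ) ≤ L := by linarith
  have hmC'pos : 0 < m*C' := mul_pos hm hC'
  have hC12 : 12 ≤ Cv := by rw [hCv]; nlinarith
  have hCm : m ≤ Cv := by rw [hCv]; nlinarith
  have hC5 : 5*m*C' ≤ Cv := by rw [hCv]; nlinarith
  set q : ℝ := Real.sqrt γ with hq
  have hq0 : 0 < q := Real.sqrt_pos.mpr hγ0
  have hq2 : q^2 = γ := Real.sq_sqrt hγ0.le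
  have hq1 : q < 1 := by nlinarith
  set Lt1 : ℝ := L ^ τ₁ with hLt1def
  set Lt : ℝ := L ^ τ with hLtdef
  have hLt1_ge1 : 1 ≤ Lt1 := by
    calc (1:ℝ) = L ^ (0:ℝ) := (Real.rpow_zero L).symm
    _ ≤ Lt1 := Real.rpow_le_rpow_of_exponent_le hL1 (by linarith)
  have hLLt1 : L ≤ Lt1 := by
    calc L = L ^ (1:ℝ) := (Real.rpow_one L).symm
    _ ≤ Lt1 := Real.rpow_le_rpow_of_exponent_le hL1 hτ₁
  have hLt1Lt : Lt1 ≤ Lt := Real.rpow_le_rpow_of_exponent_le hL1 hττ₁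
  -- rewrite the γ-exponent
  have hγhalf : γ ^ (-(1:ℝ)/2) = q⁻¹ := by
    rw [show -(1:ℝ)/2 = -(1/2) by norm_num, Real.rpow_neg hγ0.le, hq,
      Real.sqrt_eq_rpow]
  rw [hγhalf] at hj hk
  have hLneg1 : L ^ (-τ₁) = Lt1⁻¹ := by rw [Real.rpow_neg hL0, hLt1def]
  rw [hLneg1] at hMel
  rw [show L ^ (-τ) = Lt⁻¹ by rw [Real.rpow_neg hL0, hLtdef],
    show γ ^ ((3:ℝ)/2) = γ * q by
      rw [show (3:ℝ)/2 = 1 + 1/2 by norm_num, Real.rpow_add hγ0, Real.rpow_one, hq,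
        Real.sqrt_eq_rpow]]
  clear_value Cv L q Lt1 Lt
  clear hCv hLdef hLt1def hLtdef hγhalf hLneg1
  have hxj : Cv * Lt1 ≤ q * (j:ℝ) := by
    have h := mul_le_mul_of_nonneg_right hj hq0.le
    rw [mul_assoc, inv_mul_cancel₀ hq0.ne', mul_one] at h
    linarith [h]
  have hxk : Cv * Lt1 ≤ q * (k:ℝ) := by
    have h := mul_le_mul_of_nonneg_right hk hq0.le
    rw [mul_assoc, inv_mul_cancel₀ hq0.ne', mul_one] at h
    linarith [h]
  have h12C : 12 ≤ Cv * Lt1 := le_trans (by norm_num)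
    (mul_le_mul hC12 hLt1_ge1 zero_le_one (by linarith))
  have hj12 : 12 ≤ (j:ℝ) := by
    nlinarith [hxj, h12C, mul_le_of_le_one_right (Nat.cast_nonneg (α := ℝ) j) hq1.le]
  have hk12 : 12 ≤ (k:ℝ) := by
    nlinarith [hxk, h12C, mul_le_of_le_one_right (Nat.cast_nonneg (α := ℝ) k) hq1.le]
  have hjne : j ≠ 0 := by
    have h : 0 < (j:ℝ) := by linarith
    exact (Nat.cast_pos.mp h).ne'
  have hkne : k ≠ 0 := by
    have h : 0 < (k:ℝ) := by linarith
    exact (Nat.cast_pos.mp h).ne'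
  -- bound on the remainders
  have hbnd : ∀ n : ℕ, 12 ≤ (n:ℝ) → |a n + η * b n| ≤ γ^2 / (n:ℝ) := by
    intro n hn
    have h := hab n
    rw [max_eq_right (by linarith : (1:ℝ) ≤ (n:ℝ)), one_mul] at h
    have habs : |a n + η*b n| ≤ |a n| + |b n| := by
      calc |a n + η*b n| ≤ |a n| + |η*b n| := abs_add_le _ _
      _ = |a n| + |b n| := by rcases hη with rfl|rfl <;> simp [abs_mul]
    refine habs.trans ?_
    rw [le_div_iff₀ (show (0:ℝ) < (n:ℝ) by linarith)]
    nlinarith [h]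
  rw [hlam j, hlam k, if_neg hjne, if_neg hkne]
  exact core m hm C' Cv γ c L _ (j:ℝ) (k:ℝ) (a j + η*b j) (a k + η*b k) q Lt1 Lt
    hC12 hCm hC5 hC' hγ0 hγ2 hc hL1 hq hLt1_ge1 hLLt1 hLt1Lt hxj hxk hj12 hk12
    hjk (hbnd j hj12) (hbnd k hk12) hMel
end

section
/- Summability of resonant-set measures: let τ ≥ 2ν + 4 and suppose for each (ℓ, j, k) ∈ ℤ^ν × ℕ₀ × ℕ₀ with (ℓ,j,k) ≠ (0,j,j) we are given a measurable set R_{ℓjk} ⊆ [-1/2,1/2]^ν with: (a) R_{ℓjk} = ∅ unless |j − k| ≤ C⟨ℓ⟩ (for a fixed constant C); (b) R_{ℓjk} = ∅ unless max(j,k) ≤ K⟨ℓ⟩^{ν+2}γ^{-1/2} (for fixed K and γ ∈ (0,1/2)); (c) |R_{ℓjk}| ≤ μ⟨ℓ⟩^{-τ-1} with μ = γ^{3/2}. Then | ⋃_{ℓ,j,k} R_{ℓjk} | ≤ C' γ for a constant C' depending only on ν, C, K. -/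
open MeasureTheory ENNReal Finset

lemma aux_tsum_le_card_mul {α : Type*} (f : α → ℝ≥0∞) (s : Finset α) (M : ℝ≥0∞)
    (h0 : ∀ a ∉ s, f a = 0) (hM : ∀ a, f a ≤ M) :
    ∑' a, f a ≤ (s.card : ℝ≥0∞) * M := by
  rw [tsum_eq_sum h0]
  calc ∑ a ∈ s, f a ≤ ∑ _a ∈ s, M := Finset.sum_le_sum fun a _ => hM a
  _ = (s.card : ℝ≥0∞) * M := by rw [Finset.sum_const, nsmul_eq_mul]

lemma aux_T_ne_top (ν : ℕ) :
    (∑' ℓ : Fin ν → ℤ, ENNReal.ofReal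
      ((((max 1 (∑ i, |ℓ i|) : ℤ) : ℝ)) ^ (ν + 2))⁻¹) ≠ ∞ := by
  set t : (Fin ν → ℤ) → ℝ≥0∞ := fun ℓ =>
    ENNReal.ofReal ((((max 1 (∑ i, |ℓ i|) : ℤ) : ℝ)) ^ (ν + 2))⁻¹ with ht
  set g : (Fin ν → ℤ) → ℕ := fun ℓ => (∑ i, |ℓ i|).toNat with hg
  set c : ℕ → ℝ≥0∞ := fun m => ENNReal.ofReal ((max 1 (m : ℝ)) ^ (ν + 2))⁻¹ with hcdef
  set F : ℕ → Finset (Fin ν → ℤ) := fun m =>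
    Finset.Icc (fun _ => -(m : ℤ)) (fun _ => (m : ℤ)) with hF
  have hsum0 : ∀ ℓ : Fin ν → ℤ, (0 : ℤ) ≤ ∑ i, |ℓ i| :=
    fun ℓ => Finset.sum_nonneg fun i _ => abs_nonneg _
  have key : ∀ ℓ, t ℓ = ∑' m : ℕ, if g ℓ = m then t ℓ else 0 := by
    intro ℓ
    rw [tsum_eq_single (g ℓ)]
    · simp
    · intro m hm; simp [Ne.symm hm]
  have h1 : (∑' ℓ, t ℓ) = ∑' m : ℕ, ∑' ℓ, (if g ℓ = m then t ℓ else 0) :=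
    (tsum_congr key).trans ENNReal.tsum_comm
  have hcard : ∀ m, (F m).card = (2 * m + 1) ^ ν := by
    intro m
    rw [hF]
    rw [Pi.card_Icc]
    simp [Int.card_Icc]
    congr 1
    omega
  have hsumeq : ∀ {ℓ m}, g ℓ = m → (∑ i, |ℓ i|) = (m : ℤ) := by
    intro ℓ m hgm
    simp only [hg] at hgm
    have := hsum0 ℓ
    omega
  have h2 : ∀ m, (∑' ℓ, (if g ℓ = m then t ℓ else 0)) ≤ ((2 * m + 1) ^ ν : ℕ) * c m := by
    intro m
    rw [← hcard m]
    apply aux_tsum_le_card_mul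
    · intro ℓ hℓ
      rw [if_neg]
      intro hgm
      apply hℓ
      have hsum := hsumeq hgm
      have habs : ∀ i, |ℓ i| ≤ (m : ℤ) := by
        intro i
        rw [← hsum]
        exact Finset.single_le_sum (fun i _ => abs_nonneg (ℓ i)) (Finset.mem_univ i)
      rw [hF, Finset.mem_Icc]
      refine ⟨fun i => ?_, fun i => ?_⟩
      · exact (abs_le.mp (habs i)).1
      · exact (abs_le.mp (habs i)).2
    · intro ℓ
      split
      · next hgm =>
        have hsum := hsumeq hgm
        rw [ht, hcdef]
        simp only [hsum]
        apply le_of_eq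
        congr 2
        push_cast
        norm_num
      · exact zero_le
  -- bound c m and sum
  have hbound : ∀ m : ℕ, ((2 * m + 1) ^ ν : ℕ) * c m ≤
      ENNReal.ofReal (3 ^ ν * 4 * (((m : ℝ) + 1) ^ 2)⁻¹) := by
    intro m
    have hx1 : (1 : ℝ) ≤ max 1 (m : ℝ) := le_max_left _ _
    have hx0 : (0 : ℝ) < max 1 (m : ℝ) := lt_of_lt_of_le one_pos hx1
    have e1 : ((2 * m + 1 : ℕ) : ℝ) ≤ 3 * max 1 (m : ℝ) := by
      have h1 : (m : ℝ) ≤ max 1 (m : ℝ) := le_max_right _ _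
      push_cast
      nlinarith
    have e2 : (max 1 (m : ℝ)) ≥ ((m : ℝ) + 1) / 2 := by
      rcases le_or_gt (m : ℝ) 1 with h | h
      · have : max 1 (m : ℝ) = max (m:ℝ) 1 := max_comm _ _
        nlinarith [le_max_left (1:ℝ) (m:ℝ)]
      · nlinarith [le_max_right (1:ℝ) (m:ℝ)]
    rw [show (((2 * m + 1) ^ ν : ℕ) : ℝ≥0∞) = ENNReal.ofReal (((2 * m + 1) ^ ν : ℕ) : ℝ) by
      rw [ENNReal.ofReal_natCast]]
    rw [← ENNReal.ofReal_mul (by positivity)]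
    apply ENNReal.ofReal_le_ofReal
    have hc : ((max 1 (m : ℝ)) ^ (ν + 2))⁻¹
        = ((max 1 (m:ℝ)) ^ ν)⁻¹ * ((max 1 (m:ℝ)) ^ 2)⁻¹ := by
      rw [pow_add, mul_inv]
    push_cast
    rw [hc]
    have hA : ((2 * (m:ℝ) + 1)) ^ ν * ((max 1 (m:ℝ)) ^ ν)⁻¹ ≤ 3 ^ ν := by
      rw [mul_inv_le_iff₀ (by positivity), ← mul_pow]
      apply pow_le_pow_left₀ (by positivity)
      push_cast at e1
      linarith
    have hB : ((max 1 (m:ℝ)) ^ 2)⁻¹ ≤ 4 * (((m : ℝ) + 1) ^ 2)⁻¹ := by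
      have hy : (0:ℝ) < ((m:ℝ)+1)^2 := by positivity
      have h2 : ((m:ℝ)+1)^2 / 4 ≤ (max 1 (m:ℝ))^2 := by
        have := pow_le_pow_left₀ (by positivity) e2 2
        calc ((m:ℝ)+1)^2 / 4 = (((m:ℝ)+1)/2)^2 := by ring
          _ ≤ _ := this
      have h3 := inv_anti₀ (by positivity) h2
      rwa [inv_div, div_eq_mul_inv] at h3
    calc ((2 * (m:ℝ) + 1)) ^ ν * (((max 1 (m:ℝ)) ^ ν)⁻¹ * ((max 1 (m:ℝ)) ^ 2)⁻¹)
        = ((2 * (m:ℝ) + 1)) ^ ν * ((max 1 (m:ℝ)) ^ ν)⁻¹ * ((max 1 (m:ℝ)) ^ 2)⁻¹ := by ring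
      _ ≤ 3 ^ ν * (4 * (((m : ℝ) + 1) ^ 2)⁻¹) := by
          apply mul_le_mul hA hB (by positivity) (by positivity)
      _ = 3 ^ ν * 4 * (((m : ℝ) + 1) ^ 2)⁻¹ := by ring
  -- summability of the comparison series
  have hsummable : Summable (fun m : ℕ => 3 ^ ν * 4 * (((m : ℝ) + 1) ^ 2)⁻¹) := by
    apply Summable.mul_left
    have h0 : Summable (fun n : ℕ => ((n : ℝ) ^ 2)⁻¹) :=
      Real.summable_nat_pow_inv.mpr one_lt_two
    have := (summable_nat_add_iff 1).mpr h0
    simpa using this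
  have hfin : (∑' m : ℕ, ENNReal.ofReal (3 ^ ν * 4 * (((m : ℝ) + 1) ^ 2)⁻¹)) ≠ ∞ := by
    rw [← ENNReal.ofReal_tsum_of_nonneg (fun m => by positivity) hsummable]
    exact ENNReal.ofReal_ne_top
  rw [h1]
  refine ne_top_of_le_ne_top hfin ?_
  exact ENNReal.tsum_le_tsum fun m => le_trans (h2 m) (hbound m)


/-- Summability of resonant-set measures: let `τ ≥ 2ν+4` and, for each
`(ℓ,j,k) ∈ ℤ^ν × ℕ₀ × ℕ₀`, let `R_{ℓjk} ⊆ [-1/2,1/2]^ν` with: (a) `R_{ℓjk} = ∅` unless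
`|j−k| ≤ C⟨ℓ⟩`; (b) `R_{ℓjk} = ∅` unless `max(j,k) ≤ K⟨ℓ⟩^{ν+2}γ^{-1/2}`; (c)
`|R_{ℓjk}| ≤ γ^{3/2}⟨ℓ⟩^{-τ-1}`.  Then the union over all `(ℓ,j,k) ≠ (0,j,j)` has
measure `≤ C' γ` with `C'` depending only on `ν`, `C`, `K`. -/
theorem stmt15 (ν : ℕ) (C K : ℝ) (hC : 0 < C) (hK : 0 < K) :
    ∃ C' > 0, ∀ τ : ℝ, 2 * (ν : ℝ) + 4 ≤ τ →
      ∀ γ : ℝ, 0 < γ → γ < 1 / 2 →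
      ∀ R : (Fin ν → ℤ) → ℕ → ℕ → Set (Fin ν → ℝ),
      (∀ (ℓ : Fin ν → ℤ) (j k : ℕ), R ℓ j k ⊆ {ω | ∀ i, ω i ∈ Set.Icc (-(1 : ℝ) / 2) (1 / 2)}) →
      (∀ (ℓ : Fin ν → ℤ) (j k : ℕ), ¬(|(j : ℝ) - (k : ℝ)| ≤ C * ((max 1 (∑ i, |ℓ i|) : ℤ) : ℝ)) →
        R ℓ j k = ∅) →
      (∀ (ℓ : Fin ν → ℤ) (j k : ℕ),
        ¬(((max j k : ℕ) : ℝ) ≤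
            K * ((max 1 (∑ i, |ℓ i|) : ℤ) : ℝ) ^ (ν + 2) * γ ^ (-(1 : ℝ) / 2)) →
        R ℓ j k = ∅) →
      (∀ (ℓ : Fin ν → ℤ) (j k : ℕ), MeasureTheory.volume (R ℓ j k) ≤
        ENNReal.ofReal
          (γ ^ ((3 : ℝ) / 2) * ((max 1 (∑ i, |ℓ i|) : ℤ) : ℝ) ^ (-τ - 1))) →
      MeasureTheory.volume
          (⋃ (ℓ : Fin ν → ℤ) (j : ℕ) (k : ℕ) (_ : ¬(ℓ = 0 ∧ j = k)), R ℓ j k)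
        ≤ ENNReal.ofReal (C' * γ) := by
  classical
  set T := ∑' ℓ : Fin ν → ℤ, ENNReal.ofReal
      ((((max 1 (∑ i, |ℓ i|) : ℤ) : ℝ)) ^ (ν + 2))⁻¹ with hTdef
  have hTne : T ≠ ∞ := aux_T_ne_top ν
  have hT0 : 0 ≤ T.toReal := ENNReal.toReal_nonneg
  refine ⟨(K + 1) * (2 * C + 1) * (T.toReal + 1), by positivity, ?_⟩
  intro τ hτ γ hγ0 hγ2 R hsub ha hb hc
  -- step 1 : subadditivity
  have step1 : volume (⋃ (ℓ : Fin ν → ℤ) (j : ℕ) (k : ℕ) (_ : ¬(ℓ = 0 ∧ j = k)), R ℓ j k)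
      ≤ ∑' ℓ : Fin ν → ℤ, ∑' j : ℕ, ∑' k : ℕ, volume (R ℓ j k) := by
    refine le_trans (measure_iUnion_le _) (ENNReal.tsum_le_tsum fun ℓ => ?_)
    refine le_trans (measure_iUnion_le _) (ENNReal.tsum_le_tsum fun j => ?_)
    refine le_trans (measure_iUnion_le _) (ENNReal.tsum_le_tsum fun k => ?_)
    exact measure_mono (Set.iUnion_subset fun _ => subset_rfl)
  -- the per-ℓ bound
  have main : ∀ ℓ : Fin ν → ℤ, (∑' j : ℕ, ∑' k : ℕ, volume (R ℓ j k)) ≤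
      ENNReal.ofReal ((K + 1) * (2 * C + 1) * γ) *
        ENNReal.ofReal ((((max 1 (∑ i, |ℓ i|) : ℤ) : ℝ)) ^ (ν + 2))⁻¹ := by
    intro ℓ
    set L : ℝ := ((max 1 (∑ i, |ℓ i|) : ℤ) : ℝ) with hLdef
    have hL1 : (1 : ℝ) ≤ L := by
      rw [hLdef]; exact_mod_cast le_max_left (1 : ℤ) _
    have hL0 : (0 : ℝ) < L := lt_of_lt_of_le one_pos hL1
    have hγinv1 : (1 : ℝ) ≤ γ ^ (-(1 : ℝ) / 2) :=
      Real.one_le_rpow_of_pos_of_le_one_of_nonpos hγ0 (by linarith) (by norm_num)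
    set B : ℝ := K * L ^ (ν + 2) * γ ^ (-(1 : ℝ) / 2) with hBdef
    set D : ℝ := C * L with hDdef
    have hB0 : 0 < B := by
      have : (0:ℝ) < γ ^ (-(1 : ℝ) / 2) := lt_of_lt_of_le one_pos hγinv1
      positivity
    have hD0 : 0 < D := by positivity
    set Nb : ℕ := ⌊B⌋₊ with hNbdef
    set Nd : ℕ := ⌊D⌋₊ with hNddef
    set M : ℝ≥0∞ := ENNReal.ofReal (γ ^ ((3 : ℝ) / 2) * L ^ (-τ - 1)) with hMdef
    have hDN : D < (Nd : ℝ) + 1 := Nat.lt_floor_add_one D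
    have hBN : B < (Nb : ℝ) + 1 := Nat.lt_floor_add_one B
    -- inner sum over k
    have inner2 : ∀ j : ℕ, (∑' k : ℕ, volume (R ℓ j k)) ≤ ((2 * Nd + 1 : ℕ) : ℝ≥0∞) * M := by
      intro j
      have h := aux_tsum_le_card_mul (fun k => volume (R ℓ j k))
        (Finset.Icc (j - Nd) (j + Nd)) M
        (by
          intro k hk
          rw [ha ℓ j k, measure_empty]
          intro habs
          apply hk
          rw [Finset.mem_Icc]
          have h1 : |(j : ℝ) - (k : ℝ)| < (Nd : ℝ) + 1 := lt_of_le_of_lt habs hDN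
          rw [abs_sub_lt_iff] at h1
          have h2 : (j : ℕ) < k + Nd + 1 := by
            have : (j : ℝ) < ((k + Nd + 1 : ℕ) : ℝ) := by push_cast; linarith [h1.1]
            exact_mod_cast this
          have h3 : (k : ℕ) < j + Nd + 1 := by
            have : (k : ℝ) < ((j + Nd + 1 : ℕ) : ℝ) := by push_cast; linarith [h1.2]
            exact_mod_cast this
          omega)
        (fun k => hc ℓ j k)
      refine le_trans h (mul_le_mul_left ?_ M)
      have : (Finset.Icc (j - Nd) (j + Nd)).card ≤ 2 * Nd + 1 := by
        rw [Nat.card_Icc]; omega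
      exact_mod_cast this
    -- outer sum over j
    have inner1 : (∑' j : ℕ, ∑' k : ℕ, volume (R ℓ j k)) ≤
        ((Nb + 1 : ℕ) : ℝ≥0∞) * (((2 * Nd + 1 : ℕ) : ℝ≥0∞) * M) := by
      have h := aux_tsum_le_card_mul (fun j => ∑' k : ℕ, volume (R ℓ j k))
        (Finset.range (Nb + 1)) (((2 * Nd + 1 : ℕ) : ℝ≥0∞) * M)
        (by
          intro j hj
          rw [ENNReal.tsum_eq_zero]
          intro k
          rw [hb ℓ j k, measure_empty]
          intro habs
          have hj' : Nb + 1 ≤ j := by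
            by_contra hcon
            exact hj (Finset.mem_range.mpr (by omega))
          have h1 : (j : ℝ) ≤ ((max j k : ℕ) : ℝ) := by
            exact_mod_cast le_max_left j k
          have h2 : ((Nb : ℝ) + 1) ≤ (j : ℝ) := by exact_mod_cast hj'
          linarith)
        (fun j => inner2 j)
      simpa [Finset.card_range] using h
    refine le_trans inner1 ?_
    -- real arithmetic
    rw [show ((Nb + 1 : ℕ) : ℝ≥0∞) = ENNReal.ofReal ((Nb + 1 : ℕ) : ℝ) from
      (ENNReal.ofReal_natCast _).symm,
      show ((2 * Nd + 1 : ℕ) : ℝ≥0∞) = ENNReal.ofReal ((2 * Nd + 1 : ℕ) : ℝ) from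
      (ENNReal.ofReal_natCast _).symm, hMdef]
    rw [← ENNReal.ofReal_mul (by positivity), ← ENNReal.ofReal_mul (by positivity),
      ← ENNReal.ofReal_mul (by positivity)]
    apply ENNReal.ofReal_le_ofReal
    -- now a pure real inequality
    have hX1 : (1 : ℝ) ≤ L ^ (ν + 2) * γ ^ (-(1 : ℝ) / 2) := by
      have h1 : (1 : ℝ) ≤ L ^ (ν + 2) := one_le_pow₀ hL1
      nlinarith
    have f1 : ((Nb + 1 : ℕ) : ℝ) ≤ (K + 1) * (L ^ (ν + 2) * γ ^ (-(1 : ℝ) / 2)) := by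
      have h1 : (Nb : ℝ) ≤ B := Nat.floor_le hB0.le
      push_cast
      rw [hBdef] at h1
      nlinarith
    have f2 : ((2 * Nd + 1 : ℕ) : ℝ) ≤ (2 * C + 1) * L := by
      have h1 : (Nd : ℝ) ≤ D := Nat.floor_le hD0.le
      rw [hDdef] at h1
      push_cast
      nlinarith
    have hγγ : γ ^ (-(1 : ℝ) / 2) * γ ^ ((3 : ℝ) / 2) = γ := by
      rw [← Real.rpow_add hγ0]
      norm_num
    have hLpow : L ^ (ν + 2) * L * L ^ (-τ - 1) ≤ (L ^ (ν + 2))⁻¹ := by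
      have e1 : L ^ (ν + 2) * L * L ^ (-τ - 1) = L ^ (((ν : ℝ) + 2) + 1 + (-τ - 1)) := by
        rw [Real.rpow_add hL0, Real.rpow_add hL0, Real.rpow_one]
        congr 2
        rw [← Real.rpow_natCast L (ν + 2)]
        push_cast
        ring_nf
      have e2 : L ^ (((ν : ℝ) + 2) + 1 + (-τ - 1)) ≤ L ^ (-((ν : ℝ) + 2)) := by
        apply Real.rpow_le_rpow_of_exponent_le hL1
        linarith
      have e3 : L ^ (-((ν : ℝ) + 2)) = (L ^ (ν + 2))⁻¹ := by
        rw [Real.rpow_neg hL0.le]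
        congr 1
        rw [← Real.rpow_natCast L (ν + 2)]
        push_cast
        ring_nf
      rw [e1]
      exact e2.trans_eq e3
    have hMnn : 0 ≤ γ ^ ((3 : ℝ) / 2) * L ^ (-τ - 1) := by positivity
    calc ((Nb + 1 : ℕ) : ℝ) * (((2 * Nd + 1 : ℕ) : ℝ) * (γ ^ ((3 : ℝ) / 2) * L ^ (-τ - 1)))
        ≤ ((K + 1) * (L ^ (ν + 2) * γ ^ (-(1 : ℝ) / 2))) *
            (((2 * C + 1) * L) * (γ ^ ((3 : ℝ) / 2) * L ^ (-τ - 1))) := by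
          apply mul_le_mul f1 (mul_le_mul f2 le_rfl hMnn (by positivity))
            (by positivity) (by positivity)
      _ = ((K + 1) * (2 * C + 1)) *
            ((γ ^ (-(1 : ℝ) / 2) * γ ^ ((3 : ℝ) / 2)) * (L ^ (ν + 2) * L * L ^ (-τ - 1))) := by
          ring
      _ = ((K + 1) * (2 * C + 1)) * (γ * (L ^ (ν + 2) * L * L ^ (-τ - 1))) := by
          rw [hγγ]
      _ ≤ ((K + 1) * (2 * C + 1)) * (γ * (L ^ (ν + 2))⁻¹) := by
          have hLp : (0:ℝ) < L ^ (ν+2) := by positivity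
          apply mul_le_mul_of_nonneg_left _ (by positivity)
          exact mul_le_mul_of_nonneg_left hLpow hγ0.le
      _ = (K + 1) * (2 * C + 1) * γ * (L ^ (ν + 2))⁻¹ := by ring
  -- sum over ℓ and conclude
  calc volume (⋃ (ℓ : Fin ν → ℤ) (j : ℕ) (k : ℕ) (_ : ¬(ℓ = 0 ∧ j = k)), R ℓ j k)
      ≤ ∑' ℓ : Fin ν → ℤ, ∑' j : ℕ, ∑' k : ℕ, volume (R ℓ j k) := step1
    _ ≤ ∑' ℓ : Fin ν → ℤ, ENNReal.ofReal ((K + 1) * (2 * C + 1) * γ) *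
          ENNReal.ofReal ((((max 1 (∑ i, |ℓ i|) : ℤ) : ℝ)) ^ (ν + 2))⁻¹ :=
        ENNReal.tsum_le_tsum main
    _ = ENNReal.ofReal ((K + 1) * (2 * C + 1) * γ) * T := by
        rw [hTdef, ENNReal.tsum_mul_left]
    _ ≤ ENNReal.ofReal ((K + 1) * (2 * C + 1) * γ) * ENNReal.ofReal (T.toReal + 1) := by
        apply mul_le_mul_right
        conv_lhs => rw [← ENNReal.ofReal_toReal hTne]
        exact ENNReal.ofReal_le_ofReal (by linarith)
    _ = ENNReal.ofReal ((K + 1) * (2 * C + 1) * (T.toReal + 1) * γ) := by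
        rw [← ENNReal.ofReal_mul (by positivity)]
        ring_nf
end
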